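/- KKT points are aligned with the prototype: suppose the prototypes w_1, …, w_k form a simplex equiangular tight frame, y ∈ {1,…,k}, h ∈ E with ‖h‖ = 1, and λ > 0 satisfy Σ_{c=1}^k p_c(h)·w_c − 2·w_y + 2λ·h = 0, where p_c(h) = exp(⟨w_c, h⟩) / Σ_{c'=1}^k exp(⟨w_{c'}, h⟩). Then h = w_y. -/

import Mathlib

open scoped RealInnerProductSpace

/-- Softmax probabilities `p_c(h) = exp⟪w_c, h⟫ / Σ_{c'} exp⟪w_{c'}, h⟫`. -/
noncomputable def softmaxP {d k : ℕ} (w : Fin k → EuclideanSpace ℝ (Fin d))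
    (h : EuclideanSpace ℝ (Fin d)) (c : Fin k) : ℝ :=
  Real.exp ⟪w c, h⟫ / ∑ c' : Fin k, Real.exp ⟪w c', h⟫

set_option maxHeartbeats 1000000

/-- **KKT points are aligned with the prototype.** Suppose the unit-norm prototypes form a
simplex ETF, `‖h‖ = 1`, and `λ > 0` satisfy the stationarity (KKT) condition
`Σ_c p_c(h)·w_c − 2·w_y + 2λ·h = 0`. Then `h = w_y`. -/
theorem kkt_point_aligned (d k : ℕ) (hd : 0 < d) (hk : 2 ≤ k)
    (w : Fin k → EuclideanSpace ℝ (Fin d)) (hw : ∀ c, ‖w c‖ = 1)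
    (hetf : ∀ c c' : Fin k, c ≠ c' → ⟪w c, w c'⟫ = -1 / ((k : ℝ) - 1))
    (y : Fin k) (h : EuclideanSpace ℝ (Fin d)) (hh : ‖h‖ = 1)
    (lam : ℝ) (hlam : 0 < lam)
    (hstat : (∑ c : Fin k, softmaxP w h c • w c) - (2 : ℝ) • w y + (2 * lam) • h = 0) :
    h = w y := by
  classical
  have hk1 : (1:ℝ) ≤ (k:ℝ) - 1 := by
    have : (2:ℝ) ≤ k := by exact_mod_cast hk
    linarith
  have hk1' : (0:ℝ) < (k:ℝ) - 1 := by linarith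
  set S : ℝ := ∑ c' : Fin k, Real.exp ⟪w c', h⟫ with hS
  have hSpos : 0 < S :=
    Finset.sum_pos (fun c _ => Real.exp_pos _) ⟨y, Finset.mem_univ y⟩
  have hpdef : ∀ c, softmaxP w h c = Real.exp ⟪w c, h⟫ / S := fun c => rfl
  have psum : ∑ c, softmaxP w h c = 1 := by
    simp only [hpdef]
    rw [← Finset.sum_div, div_self hSpos.ne']
  -- Gram matrix
  have gram : ∀ c b : Fin k, ⟪w c, w b⟫ = if c = b then (1:ℝ) else -1 / ((k:ℝ) - 1) := by
    intro c b
    by_cases hcb : c = b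
    · subst hcb
      rw [if_pos rfl, real_inner_self_eq_norm_mul_norm, hw c, one_mul]
    · rw [if_neg hcb, hetf c b hcb]
  -- sum of ETF vectors is zero
  have sumw : (∑ c, w c) = 0 := by
    have hrow : ∀ c : Fin k, ⟪w c, ∑ b, w b⟫ = 0 := by
      intro c
      rw [inner_sum]
      rw [Finset.sum_congr rfl fun b _ => gram c b]
      have hrw : (∑ b : Fin k, if c = b then (1:ℝ) else -1/((k:ℝ)-1))
          = ∑ b : Fin k, ((-1/((k:ℝ)-1)) + if c = b then (1 - (-1/((k:ℝ)-1))) else 0) := by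
        refine Finset.sum_congr rfl fun b _ => ?_
        by_cases hcb : c = b <;> simp [hcb]
      rw [hrw, Finset.sum_add_distrib, Finset.sum_const, Finset.sum_ite_eq]
      simp only [Finset.mem_univ, if_true, Finset.card_univ, Fintype.card_fin, nsmul_eq_mul]
      field_simp
      ring
    have : ⟪∑ c, w c, ∑ b, w b⟫ = 0 := by
      rw [sum_inner]
      exact Finset.sum_eq_zero fun c _ => hrow c
    exact inner_self_eq_zero.mp this
  -- scalar stationarity equations
  have key : ∀ b : Fin k,
      softmaxP w h b * ((k:ℝ)/((k:ℝ)-1)) - 1/((k:ℝ)-1)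
        - 2 * ⟪w y, w b⟫ + 2 * lam * ⟪w b, h⟫ = 0 := by
    intro b
    have h0 := congrArg (fun v : EuclideanSpace ℝ (Fin d) => ⟪v, w b⟫) hstat
    simp only [inner_zero_left, inner_add_left, inner_sub_left, real_inner_smul_left,
      sum_inner] at h0
    have hsum : (∑ c : Fin k, softmaxP w h c * ⟪w c, w b⟫)
        = softmaxP w h b * ((k:ℝ)/((k:ℝ)-1)) - 1/((k:ℝ)-1) := by
      have hterm : ∀ c : Fin k, softmaxP w h c * ⟪w c, w b⟫
          = softmaxP w h c * (-1/((k:ℝ)-1))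
            + (if c = b then softmaxP w h c * (1 - (-1/((k:ℝ)-1))) else 0) := by
        intro c
        rw [gram c b]
        by_cases hcb : c = b <;> simp [hcb] <;> ring
      rw [Finset.sum_congr rfl fun c _ => hterm c, Finset.sum_add_distrib,
        ← Finset.sum_mul, psum, Finset.sum_ite_eq' Finset.univ b]
      simp only [Finset.mem_univ, if_true]
      field_simp
      ring
    rw [hsum] at h0
    rw [real_inner_comm (w b) h] at h0
    exact h0
  -- pick a wrong class b0
  obtain ⟨b0, hb0⟩ : ∃ b0 : Fin k, b0 ≠ y := by
    have : 1 < Fintype.card (Fin k) := by rw [Fintype.card_fin]; omega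
    exact Fintype.exists_ne_of_one_lt_card this y
  -- all wrong-class logits are equal
  have teq : ∀ b : Fin k, b ≠ y → ⟪w b, h⟫ = ⟪w b0, h⟫ := by
    intro b hb
    have k1 := key b
    have k2 := key b0
    rw [gram y b, if_neg (Ne.symm hb)] at k1
    rw [gram y b0, if_neg (Ne.symm hb0)] at k2
    -- subtract
    have hdiff : (softmaxP w h b - softmaxP w h b0) * ((k:ℝ)/((k:ℝ)-1))
        + 2 * lam * (⟪w b, h⟫ - ⟪w b0, h⟫) = 0 := by linarith
    rw [hpdef b, hpdef b0] at hdiff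
    set ta := (⟪w b, h⟫ : ℝ) with hta
    set tb := (⟪w b0, h⟫ : ℝ) with htb
    have hq : 0 < (k:ℝ)/((k:ℝ)-1) := by positivity
    rcases lt_trichotomy ta tb with hlt | heq | hgt
    · exfalso
      have he : Real.exp ta < Real.exp tb := Real.exp_lt_exp.mpr hlt
      have hd1 : Real.exp ta / S < Real.exp tb / S := by gcongr
      have h1 : (Real.exp ta / S - Real.exp tb / S) * ((k:ℝ)/((k:ℝ)-1)) < 0 :=
        mul_neg_of_neg_of_pos (by linarith) hq
      have h2 : 2 * lam * (ta - tb) < 0 := by nlinarith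
      linarith
    · exact heq
    · exfalso
      have he : Real.exp tb < Real.exp ta := Real.exp_lt_exp.mpr hgt
      have hd1 : Real.exp tb / S < Real.exp ta / S := by gcongr
      have h1 : 0 < (Real.exp ta / S - Real.exp tb / S) * ((k:ℝ)/((k:ℝ)-1)) :=
        mul_pos (by linarith) hq
      have h2 : 0 < 2 * lam * (ta - tb) := by nlinarith
      linarith
  -- collapse the weighted sum using ∑ w c = 0
  set p : ℝ := softmaxP w h b0 with hp
  set py : ℝ := softmaxP w h y with hpy
  have peq : ∀ c : Fin k, c ≠ y → softmaxP w h c = p := by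
    intro c hc
    rw [hpdef c, hp, hpdef b0, teq c hc]
  have hsplit : (∑ c : Fin k, softmaxP w h c • w c) = (py - p) • w y := by
    have hterm : ∀ c : Fin k, softmaxP w h c • w c
        = p • w c + (if c = y then (py - p) • w y else 0) := by
      intro c
      by_cases hc : c = y
      · subst hc
        rw [if_pos rfl, sub_smul]
        abel
      · rw [if_neg hc, peq c hc, add_zero]
    rw [Finset.sum_congr rfl fun c _ => hterm c, Finset.sum_add_distrib,
      ← Finset.smul_sum, sumw, smul_zero, zero_add, Finset.sum_ite_eq' Finset.univ y]
    simp
  rw [hsplit] at hstat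
  have hfin : (2 * lam) • h = (2 - (py - p)) • w y := by
    have h2 : (2 * lam) • h - ((2:ℝ) • w y - (py - p) • w y) = 0 := by
      rw [← hstat]
      abel
    rw [sub_smul]
    exact sub_eq_zero.mp h2
  -- positivity facts
  have hp0 : 0 < p := by
    rw [hp, hpdef]
    positivity
  have hpy1 : py ≤ 1 := by
    rw [hpy, hpdef]
    rw [div_le_one hSpos, hS]
    exact Finset.single_le_sum (f := fun c : Fin k => Real.exp ⟪w c, h⟫) (fun c _ => (Real.exp_pos _).le) (Finset.mem_univ y)
  have hcoef : (0:ℝ) < 2 - (py - p) := by linarith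
  -- compare norms
  have hn := congrArg norm hfin
  rw [norm_smul, norm_smul, hh, hw y, mul_one, mul_one, Real.norm_eq_abs,
    Real.norm_eq_abs, abs_of_pos (by linarith : (0:ℝ) < 2 * lam),
    abs_of_pos hcoef] at hn
  rw [hn] at hfin
  have h2l : (2 - (py - p)) ≠ 0 := hcoef.ne'
  exact smul_right_injective (EuclideanSpace ℝ (Fin d)) h2l hfin
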